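/- Let A be a real m×n matrix whose rows a_1,…,a_m are all nonzero, and let σ ≥ 0 satisfy σ‖y‖ ≤ ‖Ay‖ for all y ∈ ℝ^n (i.e., σ is a lower bound on the smallest singular value of A). Let x* ∈ ℝ^n and b := Ax*. For x ∈ ℝ^n and each i, let x^{(i)} := x − ((⟨a_i, x⟩ − b_i)/‖a_i‖²) a_i. Then the one-step expected squared error under RK sampling contracts: ∑_{i=1}^m (‖a_i‖²/‖A‖_F²) ‖x^{(i)} − x*‖² ≤ (1 − σ²/‖A‖_F²) ‖x − x*‖². -/

import Mathlib

open scoped RealInnerProductSpace Matrix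

/-- The `i`-th row of a matrix, viewed as a vector of Euclidean space. -/
def Matrix.rowE {m n : ℕ} (A : Matrix (Fin m) (Fin n) ℝ) (i : Fin m) :
    EuclideanSpace ℝ (Fin n) := WithLp.toLp 2 (A i)

/-- A vector of `ℝ^m`, viewed as a vector of Euclidean space. -/
def vecEuclidean {m : ℕ} (y : Fin m → ℝ) : EuclideanSpace ℝ (Fin m) := WithLp.toLp 2 y

/-!
Writing `e = x - x*` and using `b_i = ⟪a_i, x*⟫`, the step `x^{(i)}` is `x` minus the projection
of `e` onto `a_i`, so Pythagoras gives `‖a_i‖² ‖x^{(i)} - x*‖² = ‖a_i‖² ‖e‖² - ⟪a_i, e⟫²`.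
Summing over `i` and dividing by `‖A‖_F²`, the expected error is
`‖e‖² - ‖A e‖² / ‖A‖_F²`, and `‖A e‖ ≥ σ ‖e‖` finishes.
-/

section Kaczmarz

variable {E : Type*} [NormedAddCommGroup E] [InnerProductSpace ℝ E]

theorem sq_norm_mul_sq_norm_kaczmarz_sub (a x z : E) :
    ‖a‖ ^ 2 * ‖x - ((⟪a, x⟫ - ⟪a, z⟫) / ‖a‖ ^ 2) • a - z‖ ^ 2
      = ‖a‖ ^ 2 * ‖x - z‖ ^ 2 - ⟪a, x - z⟫ ^ 2 := by
  rcases eq_or_ne a 0 with rfl | ha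
  · simp
  have ha2 : ‖a‖ ^ 2 ≠ 0 := by positivity
  rw [← inner_sub_right, sub_right_comm, norm_sub_sq_real, real_inner_smul_right,
    norm_smul, mul_pow, Real.norm_eq_abs, sq_abs, real_inner_comm]
  field_simp
  ring

theorem expected_sq_dist_kaczmarz_le {ι : Type*} [Fintype ι] (a : ι → E) (σ : ℝ)
    (hσ : ∀ y, σ ^ 2 * ‖y‖ ^ 2 ≤ ∑ i, ⟪a i, y⟫ ^ 2) (x z : E) :
    ∑ i, (‖a i‖ ^ 2 / ∑ l, ‖a l‖ ^ 2) * ‖x - ((⟪a i, x⟫ - ⟪a i, z⟫) / ‖a i‖ ^ 2) • a i - z‖ ^ 2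
      ≤ (1 - σ ^ 2 / ∑ l, ‖a l‖ ^ 2) * ‖x - z‖ ^ 2 := by
  set F := ∑ l, ‖a l‖ ^ 2
  have hsum : ∑ i, (‖a i‖ ^ 2 / F) * ‖x - ((⟪a i, x⟫ - ⟪a i, z⟫) / ‖a i‖ ^ 2) • a i - z‖ ^ 2
      = (F * ‖x - z‖ ^ 2 - ∑ i, ⟪a i, x - z⟫ ^ 2) / F := by
    simp_rw [div_mul_eq_mul_div, sq_norm_mul_sq_norm_kaczmarz_sub, ← Finset.sum_div,
      Finset.sum_sub_distrib, ← Finset.sum_mul, F]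
  rw [hsum]
  rcases (show 0 ≤ F by positivity).eq_or_lt with hF | hF
  · simp [← hF]
  rw [div_le_iff₀ hF]
  have hlower := hσ (x - z)
  have hrhs : (1 - σ ^ 2 / F) * ‖x - z‖ ^ 2 * F = F * ‖x - z‖ ^ 2 - σ ^ 2 * ‖x - z‖ ^ 2 := by
    field_simp
  linarith

end Kaczmarz

theorem Matrix.inner_rowE {m n : ℕ} (A : Matrix (Fin m) (Fin n) ℝ) (i : Fin m)
    (y : EuclideanSpace ℝ (Fin n)) : ⟪A.rowE i, y⟫ = (A *ᵥ y) i := by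
  simp [Matrix.rowE, Matrix.mulVec, dotProduct, PiLp.inner_apply, mul_comm]

theorem sq_norm_vecEuclidean_mulVec {m n : ℕ} (A : Matrix (Fin m) (Fin n) ℝ)
    (y : EuclideanSpace ℝ (Fin n)) :
    ‖vecEuclidean (A *ᵥ y)‖ ^ 2 = ∑ i, ⟪A.rowE i, y⟫ ^ 2 := by
  simp [EuclideanSpace.norm_sq_eq, vecEuclidean, Matrix.inner_rowE]

theorem rk_one_step_expected_contraction_general
    {m n : ℕ} (A : Matrix (Fin m) (Fin n) ℝ)
    (σ : ℝ) (hσ : 0 ≤ σ)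
    (hσA : ∀ y : EuclideanSpace ℝ (Fin n), σ * ‖y‖ ≤ ‖vecEuclidean (A.mulVec y)‖)
    (xstar : EuclideanSpace ℝ (Fin n)) (b : Fin m → ℝ) (hb : b = A.mulVec xstar)
    (x : EuclideanSpace ℝ (Fin n))
    (xi : Fin m → EuclideanSpace ℝ (Fin n))
    (hxi : ∀ i, xi i = x - ((⟪A.rowE i, x⟫ - b i) / ‖A.rowE i‖ ^ 2) • A.rowE i) :
    ∑ i, (‖A.rowE i‖ ^ 2 / ∑ l, ‖A.rowE l‖ ^ 2) * ‖xi i - xstar‖ ^ 2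
      ≤ (1 - σ ^ 2 / ∑ l, ‖A.rowE l‖ ^ 2) * ‖x - xstar‖ ^ 2 := by
  have hb' : ∀ i, b i = ⟪A.rowE i, xstar⟫ := fun i => by rw [hb, A.inner_rowE]
  have hσ2 : ∀ y, σ ^ 2 * ‖y‖ ^ 2 ≤ ∑ i, ⟪A.rowE i, y⟫ ^ 2 := fun y => by
    rw [← sq_norm_vecEuclidean_mulVec, ← mul_pow]
    exact pow_le_pow_left₀ (by positivity) (hσA y) 2
  simpa only [hxi, hb'] using expected_sq_dist_kaczmarz_le A.rowE σ hσ2 x xstar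

/-- For a consistent system `b = A x*` with all rows `a_i` nonzero, and
`σ ≥ 0` with `σ‖y‖ ≤ ‖Ay‖` for all `y` (a lower bound on the smallest singular value),
the one-step expected squared error under RK sampling contracts:
`∑ i (‖a_i‖²/‖A‖_F²) ‖x^{(i)} - x*‖² ≤ (1 - σ²/‖A‖_F²) ‖x - x*‖²`. -/
theorem rk_one_step_expected_contraction
    {m n : ℕ} (A : Matrix (Fin m) (Fin n) ℝ)
    (hrows : ∀ i, A.rowE i ≠ 0)
    (σ : ℝ) (hσ : 0 ≤ σ)
    (hσA : ∀ y : EuclideanSpace ℝ (Fin n), σ * ‖y‖ ≤ ‖vecEuclidean (A.mulVec y)‖)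
    (xstar : EuclideanSpace ℝ (Fin n)) (b : Fin m → ℝ) (hb : b = A.mulVec xstar)
    (x : EuclideanSpace ℝ (Fin n))
    (xi : Fin m → EuclideanSpace ℝ (Fin n))
    (hxi : ∀ i, xi i = x - ((⟪A.rowE i, x⟫ - b i) / ‖A.rowE i‖ ^ 2) • A.rowE i) :
    ∑ i, (‖A.rowE i‖ ^ 2 / ∑ l, ‖A.rowE l‖ ^ 2) * ‖xi i - xstar‖ ^ 2
      ≤ (1 - σ ^ 2 / ∑ l, ‖A.rowE l‖ ^ 2) * ‖x - xstar‖ ^ 2 :=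
  rk_one_step_expected_contraction_general A σ hσ hσA xstar b hb x xi hxi
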